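/- Let m ≥ 9 with m ≠ 10, 15, let T ∈ ℂ^m ⊗ ℂ^m ⊗ ℂ^m be any concise tensor, and set r = 2m, k = ⌊√m⌋, t = k + ⌈(m−k²)/2⌉, t' = k + ⌊(m−k²)/2⌋. Define E'_{110} = ⟨a_1,…,a_k⟩⊗⟨b_1,…,b_k⟩ + ⟨a_{k+1},…,a_{t'}⟩⊗b_1 + a_1⊗⟨b_{k+1},…,b_t⟩ (and symmetrically for the other pairs of factors). Then: (i) dim((E_{110} ⊗ A) ∩ (S²A ⊗ B)) ≥ C(k+1,2)·k + (t'−k)·k + C(t'−k+1,2) + (t−k), and this quantity is at least 2m; (ii) the triple intersection (E_{110}⊗C) ∩ (E_{101}⊗B) ∩ (E_{011}⊗A) contains ⟨a_1,…,a_k⟩⊗⟨b_1,…,b_k⟩⊗⟨c_1,…,c_k⟩ ⊕ ⟨T⟩, of dimension k³ + 1 ≥ 2m. -/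

import Mathlib

open scoped BigOperators

/-- The standard basis vector `e_j` of `ℂᵐ`. -/
def stdVec {m : ℕ} (j : Fin m) : Fin m → ℂ := fun i => if i = j then 1 else 0

/-- The subspace `E'_{110} = ⟨a_1,…,a_k⟩⊗⟨b_1,…,b_k⟩ + ⟨a_{k+1},…,a_{t'}⟩⊗b_1 +
a_1⊗⟨b_{k+1},…,b_t⟩` of `A ⊗ B` (with the basis indexed `1,…,m` realized as indices
`0,…,m−1`, so `a_1 ↦ e_0`, etc.). -/
noncomputable def Eprime (m k t t' : ℕ) : Submodule ℂ (Fin m → Fin m → ℂ) :=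
  Submodule.span ℂ
    ({M | ∃ i j : Fin m, (i : ℕ) < k ∧ (j : ℕ) < k ∧
        M = fun x y => stdVec i x * stdVec j y} ∪
     {M | ∃ i : Fin m, k ≤ (i : ℕ) ∧ (i : ℕ) < t' ∧
        M = fun (x y : Fin m) => stdVec i x * (if (y : ℕ) = 0 then 1 else 0)} ∪
     {M | ∃ j : Fin m, k ≤ (j : ℕ) ∧ (j : ℕ) < t ∧
        M = fun (x y : Fin m) => (if (x : ℕ) = 0 then 1 else 0) * stdVec j y})

/-- The image `T(C*) ⊆ A ⊗ B` of the flattening of a tensor contracted in its third factor. -/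
noncomputable def imageThird {m : ℕ} (T : Fin m → Fin m → Fin m → ℂ) :
    Submodule ℂ (Fin m → Fin m → ℂ) :=
  Submodule.span ℂ {M | ∃ γ : Fin m → ℂ, M = fun x y => ∑ l, γ l * T x y l}

/-- The image `T(B*) ⊆ A ⊗ C`. -/
noncomputable def imageSecond {m : ℕ} (T : Fin m → Fin m → Fin m → ℂ) :
    Submodule ℂ (Fin m → Fin m → ℂ) :=
  Submodule.span ℂ {M | ∃ β : Fin m → ℂ, M = fun x z => ∑ j, β j * T x j z}

/-- The image `T(A*) ⊆ B ⊗ C`. -/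
noncomputable def imageFirst {m : ℕ} (T : Fin m → Fin m → Fin m → ℂ) :
    Submodule ℂ (Fin m → Fin m → ℂ) :=
  Submodule.span ℂ {M | ∃ α : Fin m → ℂ, M = fun y z => ∑ i, α i * T i y z}

/-- The skew-symmetrization map on `A ⊗ A ⊗ B`; its kernel is `S²A ⊗ B`. -/
noncomputable def skewSym {m : ℕ} :
    (Fin m → Fin m → Fin m → ℂ) →ₗ[ℂ] (Fin m → Fin m → Fin m → ℂ) where
  toFun U := fun i₁ i₂ j => U i₁ i₂ j - U i₂ i₁ j
  map_add' := by
    intro U V; funext i₁ i₂ j; simp; ring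
  map_smul' := by
    intro c U; funext i₁ i₂ j; simp; ring

/-- `E ⊗ C ⊆ A ⊗ B ⊗ C` for a subspace `E ⊆ A ⊗ B`: the span of elements `M ⊗ w`. -/
noncomputable def tensorThird {m : ℕ} (E : Submodule ℂ (Fin m → Fin m → ℂ)) :
    Submodule ℂ (Fin m → Fin m → Fin m → ℂ) :=
  Submodule.span ℂ {U | ∃ M ∈ E, ∃ w : Fin m → ℂ, U = fun i j l => M i j * w l}

/-- `E ⊗ B ⊆ A ⊗ B ⊗ C` (in the middle factor) for a subspace `E ⊆ A ⊗ C`. -/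
noncomputable def tensorSecond {m : ℕ} (E : Submodule ℂ (Fin m → Fin m → ℂ)) :
    Submodule ℂ (Fin m → Fin m → Fin m → ℂ) :=
  Submodule.span ℂ {U | ∃ M ∈ E, ∃ w : Fin m → ℂ, U = fun i j l => M i l * w j}

/-- `E ⊗ A ⊆ A ⊗ B ⊗ C` (in the first factor) for a subspace `E ⊆ B ⊗ C`. -/
noncomputable def tensorFirst {m : ℕ} (E : Submodule ℂ (Fin m → Fin m → ℂ)) :
    Submodule ℂ (Fin m → Fin m → Fin m → ℂ) :=
  Submodule.span ℂ {U | ∃ M ∈ E, ∃ w : Fin m → ℂ, U = fun i j l => w i * M j l}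

/-- `A ⊗ E ⊆ A ⊗ A ⊗ B` for a subspace `E ⊆ A ⊗ B`. -/
noncomputable def leftTensor {m : ℕ} (E : Submodule ℂ (Fin m → Fin m → ℂ)) :
    Submodule ℂ (Fin m → Fin m → Fin m → ℂ) :=
  Submodule.span ℂ {U | ∃ v : Fin m → ℂ, ∃ M ∈ E, U = fun i₁ i₂ j => v i₁ * M i₂ j}

/-!
Every dimension count comes from a family of standard tensors that is linearly independent
because each member has a coordinate at which all the others vanish.

For (i), when `a ≤ b` and both `e_a ⊗ e_c` and `e_b ⊗ e_c` lie in `E'_{110}`, the symmetric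
tensor `e_a e_b ⊗ e_c` lies in `S²A ⊗ B` and in `A ⊗ E'_{110}`. Counting such triples block by
block gives the stated number.

For (ii), `⟨a_1,…,a_k⟩ ⊗ ⟨b_1,…,b_k⟩ ⊆ E'_{110}` (and likewise for the other pairs of factors)
puts the cube in all three spaces. Expanding `T` along any one factor puts `T` there too.
Conciseness makes the slice `T(a_{k+1}^*)` nonzero, and since every cube tensor vanishes on that
slice, `T` is independent of the cube.

The comparisons with `2m` are elementary arithmetic in `k = ⌊√m⌋`: for `k ≥ 4` the `k³/2` term
dominates, and the case `k = 3`, `9 ≤ m ≤ 15`, is checked value by value.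
-/

theorem linearIndependent_of_dual_apply {R M ι : Type*} [Ring R] [NoZeroDivisors R]
    [AddCommGroup M] [Module R M] (v : ι → M) (f : ι → M →ₗ[R] R)
    (hdiag : ∀ i, f i (v i) ≠ 0) (hoff : ∀ i j, i ≠ j → f j (v i) = 0) :
    LinearIndependent R v := by
  classical
  rw [linearIndependent_iff']
  intro s g hg i hi
  have h := congrArg (f i) hg
  rw [map_sum, Finset.sum_eq_single_of_mem i hi
    (fun j _ hji => by rw [map_smul, hoff j i hji, smul_zero]), map_smul, map_zero,
    smul_eq_mul] at h
  exact (mul_eq_zero.mp h).resolve_right (hdiag i)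

theorem card_subtype_fst_le_snd {α : Type*} [LinearOrder α] [Fintype α] :
    Fintype.card {p : α × α // p.1 ≤ p.2} = (Fintype.card α + 1).choose 2 := by
  rw [← Fintype.card_congr Sym2.sortEquiv, Sym2.card]

section StandardTensors

variable {m : ℕ}

def pureTensor (a b c : Fin m) : Fin m → Fin m → Fin m → ℂ :=
  fun x y z => stdVec a x * stdVec b y * stdVec c z

def symTensor (a b c : Fin m) : Fin m → Fin m → Fin m → ℂ :=
  pureTensor a b c + pureTensor b a c

def tensorCoord (a b c : Fin m) : (Fin m → Fin m → Fin m → ℂ) →ₗ[ℂ] ℂ :=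
  LinearMap.proj c ∘ₗ LinearMap.proj b ∘ₗ LinearMap.proj a

@[simp]
theorem tensorCoord_apply (a b c : Fin m) (U : Fin m → Fin m → Fin m → ℂ) :
    tensorCoord a b c U = U a b c := rfl

theorem tensorCoord_pureTensor (a b c x y z : Fin m) :
    tensorCoord x y z (pureTensor a b c) = if x = a ∧ y = b ∧ z = c then 1 else 0 := by
  simp only [tensorCoord_apply, pureTensor, stdVec]
  split_ifs <;> simp_all

theorem linearIndependent_pureTensor {ι : Type*} {p : ι → Fin m × Fin m × Fin m}
    (hp : Function.Injective p) :
    LinearIndependent ℂ fun i => pureTensor (p i).1 (p i).2.1 (p i).2.2 := by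
  refine linearIndependent_of_dual_apply _ (fun i => tensorCoord (p i).1 (p i).2.1 (p i).2.2)
    (fun i => ?_) (fun i j hij => ?_)
  · rw [tensorCoord_pureTensor, if_pos ⟨rfl, rfl, rfl⟩]
    exact one_ne_zero
  · rw [tensorCoord_pureTensor, if_neg]
    rintro ⟨h₁, h₂, h₃⟩
    exact hij (hp (Prod.ext h₁ (Prod.ext h₂ h₃)).symm)

theorem linearIndependent_symTensor :
    LinearIndependent ℂ fun p : {p : Fin m × Fin m × Fin m // p.1 ≤ p.2.1} =>
      symTensor p.1.1 p.1.2.1 p.1.2.2 := by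
  refine linearIndependent_of_dual_apply _
    (fun p => tensorCoord p.1.1 p.1.2.1 p.1.2.2) (fun p => ?_) (fun p q hpq => ?_)
  · rw [symTensor, map_add, tensorCoord_pureTensor, tensorCoord_pureTensor,
      if_pos ⟨rfl, rfl, rfl⟩]
    split_ifs <;> norm_num
  · obtain ⟨⟨a, b, c⟩, hab⟩ := p
    obtain ⟨⟨a', b', c'⟩, hab'⟩ := q
    simp only [symTensor, map_add, tensorCoord_pureTensor]
    rw [if_neg, if_neg, add_zero]
    · rintro ⟨rfl, rfl, rfl⟩
      exact hpq <| Subtype.ext <|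
        Prod.ext (le_antisymm hab hab') (Prod.ext (le_antisymm hab' hab) rfl)
    · rintro ⟨rfl, rfl, rfl⟩
      exact hpq rfl

theorem symTensor_mem_ker_skewSym (a b c : Fin m) : symTensor a b c ∈ LinearMap.ker skewSym := by
  rw [LinearMap.mem_ker]
  funext x y z
  simp only [skewSym, LinearMap.coe_mk, AddHom.coe_mk, symTensor, pureTensor, Pi.add_apply,
    Pi.zero_apply]
  ring

theorem symTensor_mem_leftTensor {E : Submodule ℂ (Fin m → Fin m → ℂ)} {a b c : Fin m}
    (ha : (fun y z => stdVec a y * stdVec c z) ∈ E)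
    (hb : (fun y z => stdVec b y * stdVec c z) ∈ E) :
    symTensor a b c ∈ leftTensor E := by
  refine add_mem (Submodule.subset_span ⟨stdVec a, _, hb, ?_⟩)
    (Submodule.subset_span ⟨stdVec b, _, ha, ?_⟩) <;>
  · funext x y z
    simp only [pureTensor]
    ring

theorem pureTensor_mem_tensorThird {E : Submodule ℂ (Fin m → Fin m → ℂ)} {a b c : Fin m}
    (h : (fun x y => stdVec a x * stdVec b y) ∈ E) : pureTensor a b c ∈ tensorThird E :=
  Submodule.subset_span ⟨_, h, stdVec c, rfl⟩

theorem pureTensor_mem_tensorSecond {E : Submodule ℂ (Fin m → Fin m → ℂ)} {a b c : Fin m}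
    (h : (fun x z => stdVec a x * stdVec c z) ∈ E) : pureTensor a b c ∈ tensorSecond E :=
  Submodule.subset_span ⟨_, h, stdVec b, by funext x y z; simp only [pureTensor]; ring⟩

theorem pureTensor_mem_tensorFirst {E : Submodule ℂ (Fin m → Fin m → ℂ)} {a b c : Fin m}
    (h : (fun y z => stdVec b y * stdVec c z) ∈ E) : pureTensor a b c ∈ tensorFirst E :=
  Submodule.subset_span ⟨_, h, stdVec a, by funext x y z; simp only [pureTensor]; ring⟩

end StandardTensors

section Flattenings

variable {m : ℕ}

theorem tensorThird_mono {E F : Submodule ℂ (Fin m → Fin m → ℂ)} (h : E ≤ F) :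
    tensorThird E ≤ tensorThird F :=
  Submodule.span_mono fun _ ⟨M, hM, w, hU⟩ => ⟨M, h hM, w, hU⟩

theorem tensorSecond_mono {E F : Submodule ℂ (Fin m → Fin m → ℂ)} (h : E ≤ F) :
    tensorSecond E ≤ tensorSecond F :=
  Submodule.span_mono fun _ ⟨M, hM, w, hU⟩ => ⟨M, h hM, w, hU⟩

theorem tensorFirst_mono {E F : Submodule ℂ (Fin m → Fin m → ℂ)} (h : E ≤ F) :
    tensorFirst E ≤ tensorFirst F :=
  Submodule.span_mono fun _ ⟨M, hM, w, hU⟩ => ⟨M, h hM, w, hU⟩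

theorem mem_tensorThird_imageThird (T : Fin m → Fin m → Fin m → ℂ) :
    T ∈ tensorThird (imageThird T) := by
  have hT : T = ∑ l, fun x y z => T x y l * stdVec l z := by
    funext x y z
    simp [Finset.sum_apply, stdVec]
  rw [hT]
  refine Submodule.sum_mem _ fun l _ => Submodule.subset_span
    ⟨_, Submodule.subset_span ⟨stdVec l, ?_⟩, stdVec l, rfl⟩
  simp [stdVec]

theorem mem_tensorSecond_imageSecond (T : Fin m → Fin m → Fin m → ℂ) :
    T ∈ tensorSecond (imageSecond T) := by
  have hT : T = ∑ j, fun x y z => T x j z * stdVec j y := by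
    funext x y z
    simp [Finset.sum_apply, stdVec]
  rw [hT]
  refine Submodule.sum_mem _ fun j _ => Submodule.subset_span
    ⟨_, Submodule.subset_span ⟨stdVec j, ?_⟩, stdVec j, rfl⟩
  simp [stdVec]

theorem mem_tensorFirst_imageFirst (T : Fin m → Fin m → Fin m → ℂ) :
    T ∈ tensorFirst (imageFirst T) := by
  have hT : T = ∑ i, fun x y z => stdVec i x * T i y z := by
    funext x y z
    simp [Finset.sum_apply, stdVec]
  rw [hT]
  refine Submodule.sum_mem _ fun i _ => Submodule.subset_span
    ⟨_, Submodule.subset_span ⟨stdVec i, ?_⟩, stdVec i, rfl⟩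
  simp [stdVec]

theorem exists_apply_ne_zero_of_injective_flattening {T : Fin m → Fin m → Fin m → ℂ}
    (hA : Function.Injective fun (α : Fin m → ℂ) (j k : Fin m) => ∑ i, α i * T i j k)
    (i : Fin m) : ∃ y z, T i y z ≠ 0 := by
  by_contra! h
  have h0 := congrFun (@hA (stdVec i) 0 (by funext y z; simp [stdVec, h])) i
  simp [stdVec] at h0

end Flattenings

section Eprime

variable {m : ℕ}

def EprimeSupport (k t t' a c : ℕ) : Prop :=
  (a < k ∧ c < k) ∨ (k ≤ a ∧ a < t' ∧ c = 0) ∨ (a = 0 ∧ k ≤ c ∧ c < t)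

theorem mem_Eprime {k t t' : ℕ} {a c : Fin m} (h : EprimeSupport k t t' a c) :
    (fun y z => stdVec a y * stdVec c z) ∈ Eprime m k t t' := by
  apply Submodule.subset_span
  rcases h with ⟨ha, hc⟩ | ⟨hka, hat', hc⟩ | ⟨ha, hkc, hct⟩
  · exact Or.inl (Or.inl ⟨a, c, ha, hc, rfl⟩)
  · refine Or.inl (Or.inr ⟨a, hka, hat', ?_⟩)
    simp only [stdVec, Fin.ext_iff, hc]
  · refine Or.inr ⟨c, hkc, hct, ?_⟩
    simp only [stdVec, Fin.ext_iff, ha]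

theorem card_le_finrank_ker_skewSym_inf_leftTensor {ι : Type*} [Fintype ι]
    {E : Submodule ℂ (Fin m → Fin m → ℂ)} {p : ι → Fin m × Fin m × Fin m}
    (hp : Function.Injective p) (hle : ∀ i, (p i).1 ≤ (p i).2.1)
    (hE₁ : ∀ i, (fun y z => stdVec (p i).1 y * stdVec (p i).2.2 z) ∈ E)
    (hE₂ : ∀ i, (fun y z => stdVec (p i).2.1 y * stdVec (p i).2.2 z) ∈ E) :
    Fintype.card ι ≤ Module.finrank ℂ ↥(LinearMap.ker skewSym ⊓ leftTensor E) := by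
  have hmem : ∀ i, symTensor (p i).1 (p i).2.1 (p i).2.2 ∈
      LinearMap.ker skewSym ⊓ leftTensor E :=
    fun i => ⟨symTensor_mem_ker_skewSym _ _ _, symTensor_mem_leftTensor (hE₁ i) (hE₂ i)⟩
  have hli : LinearIndependent ℂ fun i => symTensor (p i).1 (p i).2.1 (p i).2.2 :=
    linearIndependent_symTensor.comp (fun i => ⟨p i, hle i⟩)
      fun i j h => hp (congrArg Subtype.val h)
  exact (LinearIndependent.of_comp (Submodule.subtype _)
    (v := fun i => (⟨_, hmem i⟩ : ↥(LinearMap.ker skewSym ⊓ leftTensor E))) hli)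
    |>.fintype_card_le_finrank

abbrev Witness (k t t' : ℕ) : Type :=
  ({p : Fin k × Fin k // p.1 ≤ p.2} × Fin k) ⊕ (Fin (t' - k) × Fin k) ⊕
    {p : Fin (t' - k) × Fin (t' - k) // p.1 ≤ p.2} ⊕ Fin (t - k)

theorem card_witness (k t t' : ℕ) :
    Fintype.card (Witness k t t') =
      Nat.choose (k + 1) 2 * k + (t' - k) * k + Nat.choose (t' - k + 1) 2 + (t - k) := by
  simp only [Fintype.card_sum, Fintype.card_prod, card_subtype_fst_le_snd, Fintype.card_fin]
  ring

variable {k t t' : ℕ}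

/-- The four blocks are `S²⟨a_1,…,a_k⟩ ⊗ ⟨b_1,…,b_k⟩`, `⟨a_{k+1},…,a_{t'}⟩ · ⟨a_1,…,a_k⟩ ⊗ b_1`,
`S²⟨a_{k+1},…,a_{t'}⟩ ⊗ b_1` and `a_1² ⊗ ⟨b_{k+1},…,b_t⟩`. -/
def witnessTriple (hk : 0 < k) (hkt' : k ≤ t') (ht't : t' ≤ t) (htm : t ≤ m) :
    Witness k t t' → Fin m × Fin m × Fin m
  | .inl ⟨⟨(i, j), _⟩, l⟩ => (⟨i, by omega⟩, ⟨j, by omega⟩, ⟨l, by omega⟩)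
  | .inr (.inl (i, j)) => (⟨j, by omega⟩, ⟨k + i, by omega⟩, ⟨0, by omega⟩)
  | .inr (.inr (.inl ⟨(i, j), _⟩)) => (⟨k + i, by omega⟩, ⟨k + j, by omega⟩, ⟨0, by omega⟩)
  | .inr (.inr (.inr l)) => (⟨0, by omega⟩, ⟨0, by omega⟩, ⟨k + l, by omega⟩)

variable (hk : 0 < k) (hkt' : k ≤ t') (ht't : t' ≤ t) (htm : t ≤ m)

theorem witnessTriple_injective : Function.Injective (witnessTriple hk hkt' ht't htm) := by
  rintro (⟨⟨⟨_, _⟩, _⟩, _⟩ | ⟨_, _⟩ | ⟨⟨_, _⟩, _⟩ | _) (⟨⟨⟨_, _⟩, _⟩, _⟩ | ⟨_, _⟩ | ⟨⟨_, _⟩, _⟩ | _)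
    h <;>
    simp only [witnessTriple, Prod.mk.injEq, Fin.mk.injEq] at h <;>
    simp only [Sum.inl.injEq, Sum.inr.injEq, reduceCtorEq, Prod.mk.injEq, Subtype.mk.injEq,
      Fin.ext_iff] <;>
    omega

theorem witnessTriple_fst_le_snd (w : Witness k t t') :
    (witnessTriple hk hkt' ht't htm w).1 ≤ (witnessTriple hk hkt' ht't htm w).2.1 := by
  rcases w with ⟨⟨⟨i, j⟩, h⟩, l⟩ | ⟨i, j⟩ | ⟨⟨i, j⟩, h⟩ | l
  · exact h
  · simp only [witnessTriple, Fin.mk_le_mk]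
    omega
  · simp only [witnessTriple, Fin.mk_le_mk, add_le_add_iff_left]
    exact h
  · exact le_rfl

theorem eprimeSupport_witnessTriple (w : Witness k t t') :
    EprimeSupport k t t' (witnessTriple hk hkt' ht't htm w).1
        (witnessTriple hk hkt' ht't htm w).2.2 ∧
      EprimeSupport k t t' (witnessTriple hk hkt' ht't htm w).2.1
        (witnessTriple hk hkt' ht't htm w).2.2 := by
  -- `and_true` / `true_and` clear the `True`s left by `c = 0`, which `omega` cannot parse
  rcases w with ⟨⟨⟨_, _⟩, _⟩, _⟩ | ⟨_, _⟩ | ⟨⟨_, _⟩, _⟩ | _ <;>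
    simp only [witnessTriple, EprimeSupport, and_true, true_and] <;> omega

end Eprime

theorem choose_add_le_finrank_ker_skewSym_inf_leftTensor {m k t t' : ℕ} (hk : 0 < k)
    (hkt' : k ≤ t') (ht't : t' ≤ t) (htm : t ≤ m) {E : Submodule ℂ (Fin m → Fin m → ℂ)}
    (hE : Eprime m k t t' ≤ E) :
    Nat.choose (k + 1) 2 * k + (t' - k) * k + Nat.choose (t' - k + 1) 2 + (t - k) ≤
      Module.finrank ℂ ↥(LinearMap.ker skewSym ⊓ leftTensor E) := by
  rw [← card_witness]
  exact card_le_finrank_ker_skewSym_inf_leftTensor (witnessTriple_injective hk hkt' ht't htm)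
    (witnessTriple_fst_le_snd hk hkt' ht't htm)
    (fun w => hE (mem_Eprime (eprimeSupport_witnessTriple hk hkt' ht't htm w).1))
    (fun w => hE (mem_Eprime (eprimeSupport_witnessTriple hk hkt' ht't htm w).2))

section Cube

variable {m k : ℕ}

def cubeIndex (hkm : k ≤ m) : Fin k × Fin k × Fin k → Fin m × Fin m × Fin m :=
  Prod.map (Fin.castLE hkm) (Prod.map (Fin.castLE hkm) (Fin.castLE hkm))

theorem cubeIndex_injective (hkm : k ≤ m) : Function.Injective (cubeIndex hkm) :=
  (Fin.castLE_injective hkm).prodMap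
    ((Fin.castLE_injective hkm).prodMap (Fin.castLE_injective hkm))

theorem cubeTensors_eq_range (hkm : k ≤ m) :
    {U | ∃ i j l : Fin m, (i : ℕ) < k ∧ (j : ℕ) < k ∧ (l : ℕ) < k ∧
        U = fun x y z => stdVec i x * stdVec j y * stdVec l z} =
      Set.range fun q => pureTensor (cubeIndex hkm q).1 (cubeIndex hkm q).2.1
        (cubeIndex hkm q).2.2 := by
  ext U
  constructor
  · rintro ⟨i, j, l, hi, hj, hl, rfl⟩
    exact ⟨(⟨i, hi⟩, ⟨j, hj⟩, ⟨l, hl⟩), rfl⟩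
  · rintro ⟨⟨i, j, l⟩, rfl⟩
    exact ⟨_, _, _, i.isLt, j.isLt, l.isLt, rfl⟩

theorem span_cubeTensors_union_singleton_le {t t' : ℕ} (T : Fin m → Fin m → Fin m → ℂ) :
    Submodule.span ℂ
        ({U | ∃ i j l : Fin m, (i : ℕ) < k ∧ (j : ℕ) < k ∧ (l : ℕ) < k ∧
            U = fun x y z => stdVec i x * stdVec j y * stdVec l z} ∪ {T}) ≤
      tensorThird (imageThird T ⊔ Eprime m k t t') ⊓
        tensorSecond (imageSecond T ⊔ Eprime m k t t') ⊓
        tensorFirst (imageFirst T ⊔ Eprime m k t t') := by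
  rw [Submodule.span_le]
  rintro U (⟨i, j, l, hi, hj, hl, rfl⟩ | rfl)
  · have hE : ∀ (F : Submodule ℂ (Fin m → Fin m → ℂ)) {a c : Fin m}, (a : ℕ) < k →
        (c : ℕ) < k → (fun y z => stdVec a y * stdVec c z) ∈ F ⊔ Eprime m k t t' :=
      fun _ _ _ ha hc => Submodule.mem_sup_right (mem_Eprime (Or.inl ⟨ha, hc⟩))
    exact ⟨⟨pureTensor_mem_tensorThird (hE _ hi hj), pureTensor_mem_tensorSecond (hE _ hi hl)⟩,
      pureTensor_mem_tensorFirst (hE _ hj hl)⟩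
  · exact ⟨⟨tensorThird_mono le_sup_left (mem_tensorThird_imageThird _),
      tensorSecond_mono le_sup_left (mem_tensorSecond_imageSecond _)⟩,
      tensorFirst_mono le_sup_left (mem_tensorFirst_imageFirst _)⟩

theorem finrank_span_cubeTensors_union_singleton (hkm : k < m)
    {T : Fin m → Fin m → Fin m → ℂ} (hT : ∃ y z, T ⟨k, hkm⟩ y z ≠ 0) :
    Module.finrank ℂ ↥(Submodule.span ℂ
        ({U | ∃ i j l : Fin m, (i : ℕ) < k ∧ (j : ℕ) < k ∧ (l : ℕ) < k ∧
            U = fun x y z => stdVec i x * stdVec j y * stdVec l z} ∪ {T})) =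
      k ^ 3 + 1 := by
  set v := fun q => pureTensor (cubeIndex hkm.le q).1 (cubeIndex hkm.le q).2.1
    (cubeIndex hkm.le q).2.2
  obtain ⟨y, z, hyz⟩ := hT
  have hv : Submodule.span ℂ (Set.range v) ≤ LinearMap.ker (tensorCoord ⟨k, hkm⟩ y z) := by
    rw [Submodule.span_le]
    rintro _ ⟨q, rfl⟩
    rw [SetLike.mem_coe, LinearMap.mem_ker, tensorCoord_pureTensor, if_neg]
    rintro ⟨h, -⟩
    exact ne_of_gt q.1.isLt (Fin.val_eq_of_eq h)
  have hvT : LinearIndependent ℂ fun o => Option.casesOn' o T v :=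
    (linearIndependent_pureTensor (cubeIndex_injective hkm.le)).option
      fun hT => hyz (hv hT)
  rw [cubeTensors_eq_range hkm.le, Set.union_singleton,
    show insert T (Set.range v) = Set.range fun o => Option.casesOn' o T v from
      (Option.range_eq fun o => Option.casesOn' o T v).symm, finrank_span_eq_card hvT]
  simp only [Fintype.card_option, Fintype.card_prod, Fintype.card_fin]
  ring

end Cube

section Arithmetic

variable {m k : ℕ}

theorem three_le_sqrt (hm : 9 ≤ m) : 3 ≤ Nat.sqrt m :=
  Nat.le_sqrt'.mpr hm

theorem two_mul_le_choose_add {t t' : ℕ} (hm : 9 ≤ m) (hm10 : m ≠ 10) (hk : k = Nat.sqrt m)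
    (ht : t = k + (m - k ^ 2 + 1) / 2) (ht' : t' = k + (m - k ^ 2) / 2) :
    2 * m ≤ Nat.choose (k + 1) 2 * k + (t' - k) * k + Nat.choose (t' - k + 1) 2 + (t - k) := by
  have hk3 : 3 ≤ k := hk ▸ three_le_sqrt hm
  have hkm : k ^ 2 ≤ m := hk ▸ Nat.sqrt_le' m
  have hmk : m < (k + 1) ^ 2 := hk ▸ Nat.lt_succ_sqrt' m
  have hchoose : (k + 1).choose 2 * 2 = (k + 1) * k := by
    simpa using (Nat.add_one_mul_choose_eq k 1).symm
  subst ht ht'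
  obtain rfl | hk4 := hk3.eq_or_lt
  · clear hk
    interval_cases m <;> simp_all <;> decide
  · obtain ⟨n, rfl⟩ : ∃ n, m = k ^ 2 + n := ⟨m - k ^ 2, by omega⟩
    simp only [Nat.add_sub_cancel_left]
    have hq : n ≤ 2 * (n / 2) + 1 := by omega
    have hr : n / 2 ≤ (n + 1) / 2 := by omega
    generalize n / 2 = q at hq hr ⊢
    nlinarith [Nat.mul_le_mul_left q hk4.le]

theorem two_mul_le_pow_three_add_one (hm : 9 ≤ m) (hm15 : m ≠ 15) (hk : k = Nat.sqrt m) :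
    2 * m ≤ k ^ 3 + 1 := by
  have hk3 : 3 ≤ k := hk ▸ three_le_sqrt hm
  have hmk : m < (k + 1) ^ 2 := hk ▸ Nat.lt_succ_sqrt' m
  obtain rfl | hk4 := hk3.eq_or_lt
  · norm_num at hmk ⊢
    omega
  · nlinarith

end Arithmetic

theorem degree_three_tests_passed_general {m : ℕ} (hm : 9 ≤ m) (hm10 : m ≠ 10) (hm15 : m ≠ 15)
    (T : Fin m → Fin m → Fin m → ℂ)
    (hA : Function.Injective fun (α : Fin m → ℂ) (j k : Fin m) => ∑ i, α i * T i j k)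
    (k t t' : ℕ) (hk : k = Nat.sqrt m)
    (ht : t = k + (m - k ^ 2 + 1) / 2) (ht' : t' = k + (m - k ^ 2) / 2) :
    (Nat.choose (k + 1) 2 * k + (t' - k) * k + Nat.choose (t' - k + 1) 2 + (t - k) ≤
        Module.finrank ℂ
          ↥(LinearMap.ker (skewSym (m := m)) ⊓
              leftTensor (imageThird T ⊔ Eprime m k t t'))) ∧
    (2 * m ≤
      Nat.choose (k + 1) 2 * k + (t' - k) * k + Nat.choose (t' - k + 1) 2 + (t - k)) ∧
    (Submodule.span ℂ
        ({U | ∃ i j l : Fin m, (i : ℕ) < k ∧ (j : ℕ) < k ∧ (l : ℕ) < k ∧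
            U = fun x y z => stdVec i x * stdVec j y * stdVec l z} ∪ {T}) ≤
      tensorThird (imageThird T ⊔ Eprime m k t t') ⊓
        tensorSecond (imageSecond T ⊔ Eprime m k t t') ⊓
        tensorFirst (imageFirst T ⊔ Eprime m k t t')) ∧
    (Module.finrank ℂ
        ↥(Submodule.span ℂ
          ({U | ∃ i j l : Fin m, (i : ℕ) < k ∧ (j : ℕ) < k ∧ (l : ℕ) < k ∧
              U = fun x y z => stdVec i x * stdVec j y * stdVec l z} ∪ {T})) =
      k ^ 3 + 1) ∧
    (2 * m ≤ k ^ 3 + 1) := by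
  have hk3 : 3 ≤ k := hk ▸ three_le_sqrt hm
  have hkm : k ^ 2 ≤ m := hk ▸ Nat.sqrt_le' m
  have hk3k : 3 * k ≤ k ^ 2 := by nlinarith
  refine ⟨choose_add_le_finrank_ker_skewSym_inf_leftTensor (by omega) (by omega) (by omega)
      (by omega) le_sup_right,
    two_mul_le_choose_add hm hm10 hk ht ht', span_cubeTensors_union_singleton_le T,
    finrank_span_cubeTensors_union_singleton (by omega)
      (exists_apply_ne_zero_of_injective_flattening hA _),
    two_mul_le_pow_three_add_one hm hm15 hk⟩

/-- For `m ≥ 9`, `m ≠ 10, 15`, any concise tensor `T ∈ ℂᵐ ⊗ ℂᵐ ⊗ ℂᵐ`, and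
`r = 2m`, `k = ⌊√m⌋`, `t = k + ⌈(m−k²)/2⌉`, `t' = k + ⌊(m−k²)/2⌋`, with
`E_{110} = T(C*) + E'_{110}` (and symmetrically `E_{101}`, `E_{011}`):
(i) `dim((E_{110} ⊗ A) ∩ (S²A ⊗ B)) ≥ C(k+1,2)·k + (t'−k)·k + C(t'−k+1,2) + (t−k) ≥ 2m`;
(ii) the triple intersection `(E_{110}⊗C) ∩ (E_{101}⊗B) ∩ (E_{011}⊗A)` contains
`⟨a_1,…,a_k⟩⊗⟨b_1,…,b_k⟩⊗⟨c_1,…,c_k⟩ ⊕ ⟨T⟩`, of dimension `k³ + 1 ≥ 2m`. -/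
theorem degree_three_tests_passed {m : ℕ} (hm : 9 ≤ m) (hm10 : m ≠ 10) (hm15 : m ≠ 15)
    (T : Fin m → Fin m → Fin m → ℂ)
    (hA : Function.Injective fun (α : Fin m → ℂ) (j k : Fin m) => ∑ i, α i * T i j k)
    (hB : Function.Injective fun (β : Fin m → ℂ) (i k : Fin m) => ∑ j, β j * T i j k)
    (hC : Function.Injective fun (γ : Fin m → ℂ) (i j : Fin m) => ∑ k, γ k * T i j k)
    (k t t' : ℕ) (hk : k = Nat.sqrt m)
    (ht : t = k + (m - k ^ 2 + 1) / 2) (ht' : t' = k + (m - k ^ 2) / 2) :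
    (Nat.choose (k + 1) 2 * k + (t' - k) * k + Nat.choose (t' - k + 1) 2 + (t - k) ≤
        Module.finrank ℂ
          ↥(LinearMap.ker (skewSym (m := m)) ⊓
              leftTensor (imageThird T ⊔ Eprime m k t t'))) ∧
    (2 * m ≤
      Nat.choose (k + 1) 2 * k + (t' - k) * k + Nat.choose (t' - k + 1) 2 + (t - k)) ∧
    (Submodule.span ℂ
        ({U | ∃ i j l : Fin m, (i : ℕ) < k ∧ (j : ℕ) < k ∧ (l : ℕ) < k ∧
            U = fun x y z => stdVec i x * stdVec j y * stdVec l z} ∪ {T}) ≤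
      tensorThird (imageThird T ⊔ Eprime m k t t') ⊓
        tensorSecond (imageSecond T ⊔ Eprime m k t t') ⊓
        tensorFirst (imageFirst T ⊔ Eprime m k t t')) ∧
    (Module.finrank ℂ
        ↥(Submodule.span ℂ
          ({U | ∃ i j l : Fin m, (i : ℕ) < k ∧ (j : ℕ) < k ∧ (l : ℕ) < k ∧
              U = fun x y z => stdVec i x * stdVec j y * stdVec l z} ∪ {T})) =
      k ^ 3 + 1) ∧
    (2 * m ≤ k ^ 3 + 1) :=
  degree_three_tests_passed_general hm hm10 hm15 T hA k t t' hk ht ht'
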